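/- arXiv:2512.22677 — 2 statements merged into one kernel-verified Lean document; each statement's English description precedes it below -/
import Mathlib

section
/- Rigidity property of plates: if u = (u₁,u₂,u₃) ∈ V(ω) := H¹₀(ω) × H¹₀(ω) × H²₀(ω) satisfies E⁰_{αβ}(u) = 0 almost everywhere in ω for all α,β ∈ {1,2}, then u = 0 in ω. -/
open MeasureTheory Filter Topology Matrix

noncomputable section

/-- The plane `ℝ²` as a Euclidean space. -/
abbrev E2 : Type := EuclideanSpace ℝ (Fin 2)

/-- Vectors in `ℝ³`. -/
abbrev V3 : Type := Fin 3 → ℝ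

/-- The `α`-th standard basis vector of `ℝ²`. -/
def ee (α : Fin 2) : E2 := EuclideanSpace.single α (1 : ℝ)

/-- Partial derivative `∂_α f` of a scalar function on `ℝ²`. -/
def pd (α : Fin 2) (f : E2 → ℝ) : E2 → ℝ := fun y => fderiv ℝ f y (ee α)

/-- Partial derivative `∂_α f` of an `ℝ³`-valued function on `ℝ²`, componentwise. -/
def pdv (α : Fin 2) (f : E2 → V3) : E2 → V3 := fun y i => fderiv ℝ (fun x => f x i) y (ee α)

/-- Euclidean inner product in `ℝ³`. -/
def dot3 (a b : V3) : ℝ := ∑ i, a i * b i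

/-- Vector (cross) product in `ℝ³`. -/
def cross3 (a b : V3) : V3 :=
  ![a 1 * b 2 - a 2 * b 1, a 2 * b 0 - a 0 * b 2, a 0 * b 1 - a 1 * b 0]

/-- Euclidean norm in `ℝ³`. -/
def norm3 (a : V3) : ℝ := Real.sqrt (dot3 a a)

/-- Test functions: infinitely differentiable with compact support contained in `ω`. -/
def IsTest (ω : Set E2) (φ : E2 → ℝ) : Prop :=
  ContDiff ℝ (⊤ : ℕ∞) φ ∧ HasCompactSupport φ ∧ tsupport φ ⊆ ω

/-- `ω` has a Lipschitz-continuous boundary: near every boundary point, up to a rigid motion,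
`ω` is the region above the graph of a Lipschitz function. -/
def HasLipschitzBoundary (ω : Set E2) : Prop :=
  ∀ x ∈ frontier ω, ∃ (e : E2 ≃ₗᵢ[ℝ] E2) (f : ℝ → ℝ) (L : NNReal) (r : ℝ),
    0 < r ∧ LipschitzWith L f ∧
    ∀ z ∈ Metric.ball x r, (z ∈ ω ↔ f ((e (z - x)) 0) < (e (z - x)) 1)

/-- `ω ⊂ ℝ²` is a bounded, connected, open set with Lipschitz-continuous boundary. -/
def IsNiceDomain (ω : Set E2) : Prop :=
  IsOpen ω ∧ IsConnected ω ∧ Bornology.IsBounded ω ∧ HasLipschitzBoundary ω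

/-- `g` is the weak (distributional) derivative `∂_α u` in `ω`. -/
def IsWeakDeriv (ω : Set E2) (α : Fin 2) (u g : E2 → ℝ) : Prop :=
  ∀ φ : E2 → ℝ, IsTest ω φ → ∫ y in ω, u y * pd α φ y = - ∫ y in ω, g y * φ y

/-- `u ∈ H¹₀(ω)` with weak gradient `g`: `u` and `g` are square-integrable, `g` is the weak
gradient of `u`, and `u` is an `H¹`-limit of test functions. -/
def MemH10 (ω : Set E2) (u : E2 → ℝ) (g : Fin 2 → E2 → ℝ) : Prop :=
  MemLp u 2 (volume.restrict ω) ∧ (∀ α, MemLp (g α) 2 (volume.restrict ω)) ∧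
  (∀ α, IsWeakDeriv ω α u (g α)) ∧
  ∃ φ : ℕ → E2 → ℝ, (∀ n, IsTest ω (φ n)) ∧
    Tendsto (fun n => ∫ y in ω,
      ((u y - φ n y) ^ 2 + ∑ α, (g α y - pd α (φ n) y) ^ 2)) atTop (𝓝 0)

/-- `u ∈ H²₀(ω)` with weak gradient `g` and weak Hessian `h`. -/
def MemH20 (ω : Set E2) (u : E2 → ℝ) (g : Fin 2 → E2 → ℝ)
    (h : Fin 2 → Fin 2 → E2 → ℝ) : Prop :=
  MemLp u 2 (volume.restrict ω) ∧ (∀ α, MemLp (g α) 2 (volume.restrict ω)) ∧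
  (∀ α β, MemLp (h α β) 2 (volume.restrict ω)) ∧
  (∀ α, IsWeakDeriv ω α u (g α)) ∧ (∀ α β, IsWeakDeriv ω β (g α) (h α β)) ∧
  ∃ φ : ℕ → E2 → ℝ, (∀ n, IsTest ω (φ n)) ∧
    Tendsto (fun n => ∫ y in ω,
      ((u y - φ n y) ^ 2 + ∑ α, (g α y - pd α (φ n) y) ^ 2
        + ∑ α, ∑ β, (h α β y - pd β (pd α (φ n)) y) ^ 2)) atTop (𝓝 0)

/-- A displacement field `(u₁, u₂, u₃)` together with its weak first derivatives
`du i α = ∂_α u_i` and the weak second derivatives `ddu3 α β = ∂_{αβ} u₃` of the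
transverse component. -/
structure Disp where
  u : Fin 3 → E2 → ℝ
  du : Fin 3 → Fin 2 → E2 → ℝ
  ddu3 : Fin 2 → Fin 2 → E2 → ℝ

/-- Membership in `V(ω) = H¹₀(ω) × H¹₀(ω) × H²₀(ω)`. -/
def MemV (ω : Set E2) (v : Disp) : Prop :=
  (∀ α : Fin 2, MemH10 ω (v.u α.castSucc) (v.du α.castSucc)) ∧
  MemH20 ω (v.u 2) (v.du 2) v.ddu3

/-- Square of the `L²(ω)` norm. -/
def l2sq (ω : Set E2) (f : E2 → ℝ) : ℝ := ∫ y in ω, (f y) ^ 2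

/-- The `L²(ω)` norm. -/
def l2norm (ω : Set E2) (f : E2 → ℝ) : ℝ := Real.sqrt (l2sq ω f)

/-- The `H¹(ω)` norm of a function with (weak) gradient `g`. -/
def normH1 (ω : Set E2) (u : E2 → ℝ) (g : Fin 2 → E2 → ℝ) : ℝ :=
  Real.sqrt (l2sq ω u + ∑ α, l2sq ω (g α))

/-- The `H²(ω)` norm of a function with (weak) gradient `g` and Hessian `h`. -/
def normH2 (ω : Set E2) (u : E2 → ℝ) (g : Fin 2 → E2 → ℝ)
    (h : Fin 2 → Fin 2 → E2 → ℝ) : ℝ :=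
  Real.sqrt (l2sq ω u + ∑ α, l2sq ω (g α) + ∑ α, ∑ β, l2sq ω (h α β))

/-- The norm `‖u‖_{V(ω)} = ‖u₁‖_{H¹₀} + ‖u₂‖_{H¹₀} + ‖u₃‖_{H²₀}`. -/
def normV (ω : Set E2) (v : Disp) : ℝ :=
  normH1 ω (v.u 0) (v.du 0) + normH1 ω (v.u 1) (v.du 1)
    + normH2 ω (v.u 2) (v.du 2) v.ddu3

/-- Difference of two displacement fields. -/
def Disp.sub (a b : Disp) : Disp where
  u := fun i y => a.u i y - b.u i y
  du := fun i α y => a.du i α y - b.du i α y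
  ddu3 := fun α β y => a.ddu3 α β y - b.ddu3 α β y

/-- Weak convergence in `L²(ω)`. -/
def WeakL2 (ω : Set E2) (fn : ℕ → E2 → ℝ) (f : E2 → ℝ) : Prop :=
  ∀ g : E2 → ℝ, MemLp g 2 (volume.restrict ω) →
    Tendsto (fun n => ∫ y in ω, fn n y * g y) atTop (𝓝 (∫ y in ω, f y * g y))

/-- Weak convergence in `H¹₀(ω)` (tested against the `H¹` inner product with all
elements of `H¹₀(ω)`). -/
def WeakH10 (ω : Set E2) (un : ℕ → E2 → ℝ) (gn : ℕ → Fin 2 → E2 → ℝ)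
    (u : E2 → ℝ) (g : Fin 2 → E2 → ℝ) : Prop :=
  ∀ v h, MemH10 ω v h →
    Tendsto (fun n => ∫ y in ω, (un n y * v y + ∑ α, gn n α y * h α y)) atTop
      (𝓝 (∫ y in ω, (u y * v y + ∑ α, g α y * h α y)))

/-- Weak convergence in `H²₀(ω)` (tested against the `H²` inner product with all
elements of `H²₀(ω)`). -/
def WeakH20 (ω : Set E2) (un : ℕ → E2 → ℝ) (gn : ℕ → Fin 2 → E2 → ℝ)
    (hn : ℕ → Fin 2 → Fin 2 → E2 → ℝ) (u : E2 → ℝ) (g : Fin 2 → E2 → ℝ)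
    (h : Fin 2 → Fin 2 → E2 → ℝ) : Prop :=
  ∀ v gv hv, MemH20 ω v gv hv →
    Tendsto (fun n => ∫ y in ω, (un n y * v y + ∑ α, gn n α y * gv α y
        + ∑ α, ∑ β, hn n α β y * hv α β y)) atTop
      (𝓝 (∫ y in ω, (u y * v y + ∑ α, g α y * gv α y
        + ∑ α, ∑ β, h α β y * hv α β y)))

/-- Weak convergence in `V(ω)`: the first two components converge weakly in `H¹₀(ω)` and
the third converges weakly in `H²₀(ω)`. -/
def WeakV (ω : Set E2) (vn : ℕ → Disp) (v : Disp) : Prop :=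
  (∀ α : Fin 2, WeakH10 ω (fun n => (vn n).u α.castSucc)
    (fun n => (vn n).du α.castSucc) (v.u α.castSucc) (v.du α.castSucc)) ∧
  WeakH20 ω (fun n => (vn n).u 2) (fun n => (vn n).du 2)
    (fun n => (vn n).ddu3) (v.u 2) (v.du 2) v.ddu3

/-- Strong convergence in `V(ω)`. -/
def StrongV (ω : Set E2) (vn : ℕ → Disp) (v : Disp) : Prop :=
  Tendsto (fun n => normV ω ((vn n).sub v)) atTop (𝓝 0)

/-- Equality almost everywhere in `ω` of displacement fields (with their derivative data). -/
def DispAEEq (ω : Set E2) (a b : Disp) : Prop :=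
  (∀ i, a.u i =ᵐ[volume.restrict ω] b.u i) ∧
  (∀ i α, a.du i α =ᵐ[volume.restrict ω] b.du i α) ∧
  (∀ α β, a.ddu3 α β =ᵐ[volume.restrict ω] b.ddu3 α β)

/-- Covariant components `a_{αβ,θ} = ∂_αθ · ∂_βθ` of the first fundamental form. -/
def aMat (θ : E2 → V3) (y : E2) : Matrix (Fin 2) (Fin 2) ℝ :=
  Matrix.of fun α β => dot3 (pdv α θ y) (pdv β θ y)

/-- Contravariant components `a^{αβ}_θ` of the first fundamental form. -/
def ainv (θ : E2 → V3) (y : E2) : Matrix (Fin 2) (Fin 2) ℝ := (aMat θ y)⁻¹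

/-- The area element squared `a_θ = |∂₁θ ∧ ∂₂θ|²`. -/
def aDet (θ : E2 → V3) (y : E2) : ℝ :=
  dot3 (cross3 (pdv 0 θ y) (pdv 1 θ y)) (cross3 (pdv 0 θ y) (pdv 1 θ y))

/-- The unit normal vector `a_{3,θ} = ∂₁θ ∧ ∂₂θ / |∂₁θ ∧ ∂₂θ|`. -/
def a3v (θ : E2 → V3) (y : E2) : V3 :=
  fun i => cross3 (pdv 0 θ y) (pdv 1 θ y) i / norm3 (cross3 (pdv 0 θ y) (pdv 1 θ y))

/-- Covariant components `b_{αβ,θ} = a_{3,θ} · ∂_{αβ}θ` of the second fundamental form. -/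
def bM (θ : E2 → V3) (α β : Fin 2) (y : E2) : ℝ := dot3 (a3v θ y) (pdv β (pdv α θ) y)

/-- Christoffel symbols `Γ^σ_{αβ,θ} = a^σ_θ · ∂_β(∂_αθ) = a^{στ}(∂_τθ · ∂_β∂_αθ)`. -/
def Γs (θ : E2 → V3) (σ α β : Fin 2) (y : E2) : ℝ :=
  ∑ τ, ainv θ y σ τ * dot3 (pdv τ θ y) (pdv β (pdv α θ) y)

/-- `θ` is an immersion of class `C²` on `ω̄`. -/
def IsImmersion (ω : Set E2) (θ : E2 → V3) : Prop :=
  ContDiff ℝ 2 θ ∧ ∀ y ∈ closure ω, cross3 (pdv 0 θ y) (pdv 1 θ y) ≠ 0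

/-- The two-dimensional elasticity tensor `a^{αβστ}_θ`. -/
def A4 (θ : E2 → V3) (lam mu : ℝ) (α β σ τ : Fin 2) (y : E2) : ℝ :=
  (4 * lam * mu / (lam + 2 * mu)) * ainv θ y α β * ainv θ y σ τ
    + 2 * mu * (ainv θ y α σ * ainv θ y β τ + ainv θ y α τ * ainv θ y β σ)

/-- The Kronecker symbol `δ^{αβ}`. -/
def kron (α β : Fin 2) : ℝ := if α = β then 1 else 0

/-- The flat elasticity tensor `a₀^{αβστ}`. -/
def A40 (lam mu : ℝ) (α β σ τ : Fin 2) : ℝ :=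
  (4 * lam * mu / (lam + 2 * mu)) * kron α β * kron σ τ
    + 2 * mu * (kron α σ * kron β τ + kron α τ * kron β σ)

/-- The nonlinear shallow shell membrane strain `E^θ_{αβ}(η)`. -/
def Eθ (θ : E2 → V3) (v : Disp) (α β : Fin 2) : E2 → ℝ := fun y =>
  (1 / 2) * (v.du α.castSucc β y + v.du β.castSucc α y)
    - (∑ σ, Γs θ σ α β y * v.u σ.castSucc y) - bM θ α β y * v.u 2 y
    + (1 / 2) * v.du 2 α y * v.du 2 β y

/-- The shallow shell bending strain `F^θ_{αβ}(η)`. -/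
def Fθ (θ : E2 → V3) (v : Disp) (α β : Fin 2) : E2 → ℝ := fun y =>
  v.ddu3 α β y - ∑ σ, Γs θ σ α β y * v.du 2 σ y

/-- The nonlinear plate membrane strain `E⁰_{αβ}(η)`. -/
def E0d (v : Disp) (α β : Fin 2) : E2 → ℝ := fun y =>
  (1 / 2) * (v.du α.castSucc β y + v.du β.castSucc α y)
    + (1 / 2) * v.du 2 α y * v.du 2 β y

/-- The shallow shell energy functional `J_θ`. -/
def Jθ (ω : Set E2) (θ : E2 → V3) (lam mu eps : ℝ) (p : Fin 3 → E2 → ℝ) (v : Disp) : ℝ :=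
  (1 / 2) * ∫ y in ω,
      ((eps ^ 3 / 3) * ∑ α, ∑ β, ∑ σ, ∑ τ,
          A4 θ lam mu α β σ τ y * Fθ θ v σ τ y * Fθ θ v α β y
        + eps * ∑ α, ∑ β, ∑ σ, ∑ τ,
          A4 θ lam mu α β σ τ y * Eθ θ v σ τ y * Eθ θ v α β y)
        * Real.sqrt (aDet θ y)
    - ∫ y in ω, (∑ i, p i y * v.u i y) * Real.sqrt (aDet θ y)

/-- The nonlinearly elastic plate energy functional `J`. -/
def Jplate (ω : Set E2) (lam mu eps : ℝ) (p : Fin 3 → E2 → ℝ) (v : Disp) : ℝ :=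
  (1 / 2) * ∫ y in ω,
      ((eps ^ 3 / 3) * ∑ α, ∑ β, ∑ σ, ∑ τ,
          A40 lam mu α β σ τ * v.ddu3 σ τ y * v.ddu3 α β y
        + eps * ∑ α, ∑ β, ∑ σ, ∑ τ,
          A40 lam mu α β σ τ * E0d v σ τ y * E0d v α β y)
    - ∫ y in ω, ∑ i, p i y * v.u i y

/-- The sup-norm over `ω̄` of a scalar function. -/
def C0norm (ω : Set E2) (f : E2 → ℝ) : ℝ := sSup ((fun y => |f y|) '' closure ω)

/-- The sup-norm over `ω̄` of an `ℝ³`-valued function. -/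
def vC0 (ω : Set E2) (f : E2 → V3) : ℝ := sSup ((fun y => norm3 (f y)) '' closure ω)

/-- Pointwise difference of two `ℝ³`-valued functions. -/
def vsub (θ η : E2 → V3) : E2 → V3 := fun y i => θ y i - η y i

/-- The `C²(ω̄)` distance between two maps `ω̄ → ℝ³`. -/
def C2dist (ω : Set E2) (θ η : E2 → V3) : ℝ :=
  vC0 ω (vsub θ η) + ∑ α, vC0 ω (pdv α (vsub θ η))
    + ∑ α, ∑ β, vC0 ω (pdv β (pdv α (vsub θ η)))

/-- The planar immersion `θ₀(y) = (y, 0)`. -/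
def θ0 : E2 → V3 := fun y => ![y 0, y 1, 0]

def T2 : E2 ≃ᵐ ℝ × ℝ :=
  (MeasurableEquiv.toLp 2 (Fin 2 → ℝ)).symm.trans (MeasurableEquiv.piFinTwo (fun _ => ℝ))

def T2h : E2 ≃ₜ ℝ × ℝ :=
  (EuclideanSpace.equiv (Fin 2) ℝ).toHomeomorph.trans (Homeomorph.piFinTwo (fun _ => ℝ))

lemma T2h_coe_symm : (T2.symm : ℝ × ℝ → E2) = (T2h.symm : ℝ × ℝ → E2) := rfl

lemma T2_mp : MeasurePreserving T2 volume volume :=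
  (MeasureTheory.volume_preserving_piFinTwo (fun _ : Fin 2 => ℝ)).comp
    (EuclideanSpace.volume_preserving_symm_measurableEquiv_toLp (Fin 2))

lemma T2_symm_apply (s t : ℝ) : T2.symm (s, t) = s • ee 0 + t • ee 1 := by
  have h0 : T2.symm (s, t) 0 = s := rfl
  have h1 : T2.symm (s, t) 1 = t := rfl
  apply PiLp.ext
  intro i
  fin_cases i
  · show T2.symm (s,t) 0 = _
    rw [h0]; simp [ee, EuclideanSpace.single_apply]
  · show T2.symm (s,t) 1 = _
    rw [h1]; simp [ee, EuclideanSpace.single_apply]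

lemma contDiff_pd {f : E2 → ℝ} (hf : ContDiff ℝ (⊤ : ℕ∞) f) (α : Fin 2) : ContDiff ℝ (⊤ : ℕ∞) (pd α f) :=
  (ContinuousLinearMap.apply ℝ ℝ (ee α)).contDiff.comp (hf.fderiv_right (by simp))

lemma hcs_pd {f : E2 → ℝ} (hf : HasCompactSupport f) (α : Fin 2) : HasCompactSupport (pd α f) :=
  (hf.fderiv ℝ).comp_left (g := fun L : E2 →L[ℝ] ℝ => L (ee α)) rfl

lemma integral_deriv_zero {g : ℝ → ℝ} (hg : ContDiff ℝ 1 g) (h2 : HasCompactSupport g) :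
    ∫ s : ℝ, deriv g s = 0 := by
  obtain ⟨r, hr⟩ := h2.isBounded.subset_closedBall 0
  have hint : Integrable (deriv g) :=
    (hg.continuous_deriv le_rfl).integrable_of_hasCompactSupport h2.deriv
  have key : ∫ s in Set.Iic (|r| + 1), deriv g s = g (|r|+1) :=
    h2.integral_Iic_deriv_eq hg (|r|+1)
  have hg0 : g (|r|+1) = 0 := by
    by_contra h
    have : |r| + 1 ∈ Metric.closedBall (0:ℝ) r :=
      hr (subset_tsupport g (by simpa [Function.mem_support] using h))
    simp only [Metric.mem_closedBall, Real.dist_eq, sub_zero,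
      abs_of_nonneg (by positivity : (0:ℝ) ≤ |r|+1)] at this
    nlinarith [le_abs_self r]
  have key2 : ∫ s in Set.Ioi (|r| + 1), deriv g s = - g (|r|+1) :=
    h2.integral_Ioi_deriv_eq hg (|r|+1)
  rw [← intervalIntegral.integral_Iic_add_Ioi (b := |r|+1) hint.integrableOn hint.integrableOn,
    key, key2, hg0]
  ring

-- derivative along a coordinate line
lemma line_hasDerivAt {f : E2 → ℝ} (hf : ContDiff ℝ (⊤ : ℕ∞) f) (c : E2) (w : E2) (s : ℝ) :
    HasDerivAt (fun s : ℝ => f (c + s • w)) (fderiv ℝ f (c + s • w) w) s := by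
  have h1 : HasDerivAt (fun s : ℝ => c + s • w) w s := by
    simpa using ((hasDerivAt_id s).smul_const w).const_add c
  exact ((hf.differentiable (by simp)).differentiableAt.hasFDerivAt).comp_hasDerivAt s h1

theorem integral_pd_zero' {f : E2 → ℝ} (hf : ContDiff ℝ (⊤ : ℕ∞) f) (h2f : HasCompactSupport f)
    (α : Fin 2) : ∫ y, pd α f y = 0 := by
  have hmp : MeasurePreserving T2.symm volume volume := T2_mp.symm T2
  have htrans : ∫ y, pd α f y = ∫ p : ℝ × ℝ, pd α f (T2.symm p) := by
    rw [hmp.integral_comp T2.symm.measurableEmbedding (pd α f)]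
  have hcont : Continuous (pd α f) := (contDiff_pd hf α).continuous
  have hcs2 : HasCompactSupport (fun p : ℝ × ℝ => pd α f (T2.symm p)) := by
    have h := (hcs_pd h2f α).comp_homeomorph T2h.symm
    simpa [T2h_coe_symm, Function.comp_def] using h
  have hint2 : Integrable (fun p : ℝ × ℝ => pd α f (T2.symm p)) :=
    (hcont.comp T2h.symm.continuous).integrable_of_hasCompactSupport hcs2
  rw [htrans]
  rw [MeasureTheory.Measure.volume_eq_prod] at hint2 ⊢
  rw [MeasureTheory.integral_prod _ hint2]
  -- now split by α
  fin_cases α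
  · -- α = 0 : inner variable is second; need swap. Use integral_integral_swap
    rw [MeasureTheory.integral_integral_swap (by exact hint2)]
    have inner0 : ∀ t : ℝ, ∫ s : ℝ, pd 0 f (T2.symm (s, t)) = 0 := by
      intro t
      have hg : ContDiff ℝ (⊤ : ℕ∞) (fun s : ℝ => f ((t • ee 1) + s • ee 0)) := by
        apply hf.comp
        exact contDiff_const.add (contDiff_id.smul contDiff_const)
      have hgc : HasCompactSupport (fun s : ℝ => f ((t • ee 1) + s • ee 0)) := by
        obtain ⟨r, hr⟩ := h2f.isBounded.subset_closedBall 0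
        apply HasCompactSupport.intro (isCompact_Icc (a := -(r+ ‖t • ee (1:Fin 2)‖ + 1)) (b := r + ‖t • ee (1:Fin 2)‖ + 1))
        intro s hs
        by_contra h
        have hmem : (t • ee 1) + s • ee 0 ∈ Metric.closedBall (0:E2) r :=
          hr (subset_tsupport f (by simpa [Function.mem_support] using h))
        simp only [Metric.mem_closedBall, dist_zero_right] at hmem
        have : ‖s • ee (0:Fin 2)‖ ≤ r + ‖t • ee (1:Fin 2)‖ := by
          calc ‖s • ee (0:Fin 2)‖ = ‖(t • ee 1 + s • ee 0) - t • ee 1‖ := by rw [add_sub_cancel_left]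
          _ ≤ ‖t • ee 1 + s • ee 0‖ + ‖t • ee (1:Fin 2)‖ := norm_sub_le _ _
          _ ≤ r + ‖t • ee (1:Fin 2)‖ := by linarith
        have hnorm : ‖ee (0:Fin 2)‖ = 1 := by
          simp [ee, EuclideanSpace.norm_single]
        rw [norm_smul, hnorm, mul_one, Real.norm_eq_abs] at this
        simp only [Set.mem_Icc, not_and_or, not_le] at hs
        rcases hs with h1 | h1 <;> [skip; skip] <;>
          cases abs_le.mp this with | intro hl hu => linarith
      have : ∀ s : ℝ, pd 0 f (T2.symm (s, t)) = deriv (fun s : ℝ => f ((t • ee 1) + s • ee 0)) s := by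
        intro s
        rw [T2_symm_apply]
        have := line_hasDerivAt hf (t • ee 1) (ee 0) s
        rw [(line_hasDerivAt hf (t • ee 1) (ee 0) s).deriv]
        unfold pd
        rw [add_comm (s • ee 0) (t • ee 1)]
      simp_rw [this]
      exact integral_deriv_zero (hg.of_le (by simp)) hgc
    simp [inner0]
  · -- α = 1 : inner variable is second, direct
    have inner1 : ∀ s : ℝ, ∫ t : ℝ, pd 1 f (T2.symm (s, t)) = 0 := by
      intro s
      have hg : ContDiff ℝ (⊤ : ℕ∞) (fun t : ℝ => f ((s • ee 0) + t • ee 1)) := by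
        apply hf.comp
        exact contDiff_const.add (contDiff_id.smul contDiff_const)
      have hgc : HasCompactSupport (fun t : ℝ => f ((s • ee 0) + t • ee 1)) := by
        obtain ⟨r, hr⟩ := h2f.isBounded.subset_closedBall 0
        apply HasCompactSupport.intro (isCompact_Icc (a := -(r+ ‖s • ee (0:Fin 2)‖ + 1)) (b := r + ‖s • ee (0:Fin 2)‖ + 1))
        intro t ht
        by_contra h
        have hmem : (s • ee 0) + t • ee 1 ∈ Metric.closedBall (0:E2) r :=
          hr (subset_tsupport f (by simpa [Function.mem_support] using h))
        simp only [Metric.mem_closedBall, dist_zero_right] at hmem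
        have : ‖t • ee (1:Fin 2)‖ ≤ r + ‖s • ee (0:Fin 2)‖ := by
          calc ‖t • ee (1:Fin 2)‖ = ‖(s • ee 0 + t • ee 1) - s • ee 0‖ := by rw [add_sub_cancel_left]
          _ ≤ ‖s • ee 0 + t • ee 1‖ + ‖s • ee (0:Fin 2)‖ := norm_sub_le _ _
          _ ≤ r + ‖s • ee (0:Fin 2)‖ := by linarith
        have hnorm : ‖ee (1:Fin 2)‖ = 1 := by
          simp [ee, EuclideanSpace.norm_single]
        rw [norm_smul, hnorm, mul_one, Real.norm_eq_abs] at this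
        simp only [Set.mem_Icc, not_and_or, not_le] at ht
        rcases ht with h1 | h1 <;> [skip; skip] <;>
          cases abs_le.mp this with | intro hl hu => linarith
      have : ∀ t : ℝ, pd 1 f (T2.symm (s, t)) = deriv (fun t : ℝ => f ((s • ee 0) + t • ee 1)) t := by
        intro t
        rw [T2_symm_apply]
        rw [(line_hasDerivAt hf (s • ee 0) (ee 1) t).deriv]
        rfl
      simp_rw [this]
      exact integral_deriv_zero (hg.of_le (by simp)) hgc
    simp [inner1]

-- Cauchy-Schwarz
lemma cs_abs {X : Type*} [MeasurableSpace X] (μ : Measure X) {f g : X → ℝ}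
    (hf : MemLp f 2 μ) (hg : MemLp g 2 μ) :
    |∫ x, f x * g x ∂μ| ≤ Real.sqrt (∫ x, f x ^ 2 ∂μ) * Real.sqrt (∫ x, g x ^ 2 ∂μ) := by
  have h2 : Real.HolderConjugate 2 2 := Real.HolderConjugate.two_two
  have habs : |∫ x, f x * g x ∂μ| ≤ ∫ x, |f x| * |g x| ∂μ := by
    simpa [Real.norm_eq_abs, abs_mul] using
      norm_integral_le_integral_norm (μ := μ) (fun x => f x * g x)
  have hf2 : MemLp (fun x => |f x|) (ENNReal.ofReal 2) μ := by
    simpa [Real.norm_eq_abs, ENNReal.ofReal_ofNat] using hf.norm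
  have hg2 : MemLp (fun x => |g x|) (ENNReal.ofReal 2) μ := by
    simpa [Real.norm_eq_abs, ENNReal.ofReal_ofNat] using hg.norm
  have key := MeasureTheory.integral_mul_le_Lp_mul_Lq_of_nonneg h2
    (Filter.Eventually.of_forall (fun x => abs_nonneg (f x)))
    (Filter.Eventually.of_forall (fun x => abs_nonneg (g x))) hf2 hg2
  have e1 : ∫ x, |f x| ^ (2:ℝ) ∂μ = ∫ x, f x ^ 2 ∂μ := by
    congr 1; funext x
    rw [show (2:ℝ) = ((2:ℕ):ℝ) by norm_num, Real.rpow_natCast, sq_abs]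
  have e2 : ∫ x, |g x| ^ (2:ℝ) ∂μ = ∫ x, g x ^ 2 ∂μ := by
    congr 1; funext x
    rw [show (2:ℝ) = ((2:ℕ):ℝ) by norm_num, Real.rpow_natCast, sq_abs]
  rw [e1, e2] at key
  calc |∫ x, f x * g x ∂μ| ≤ ∫ x, |f x| * |g x| ∂μ := habs
  _ ≤ (∫ x, f x ^ 2 ∂μ) ^ ((1:ℝ)/2) * (∫ x, g x ^ 2 ∂μ) ^ ((1:ℝ)/2) := key
  _ = _ := by
      rw [← Real.sqrt_eq_rpow, ← Real.sqrt_eq_rpow]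

lemma memL2_test {φ : E2 → ℝ} (hc : Continuous φ) (hcs : HasCompactSupport φ) :
    MemLp φ 2 (volume : Measure E2) := hc.memLp_of_hasCompactSupport hcs

lemma coord_le_norm (x : E2) (α : Fin 2) : |x α| ≤ ‖x‖ := by
  rw [EuclideanSpace.norm_eq, ← Real.sqrt_sq_eq_abs]
  apply Real.sqrt_le_sqrt
  calc x α ^ 2 = ‖x α‖ ^ 2 := by rw [Real.norm_eq_abs, sq_abs]
  _ ≤ ∑ i, ‖x i‖ ^ 2 := Finset.single_le_sum (fun i _ => sq_nonneg ‖x i‖) (Finset.mem_univ α)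

lemma poincare_test {R : ℝ} (hR : 0 ≤ R) {φ : E2 → ℝ} (hφ : ContDiff ℝ (⊤ : ℕ∞) φ)
    (hcs : HasCompactSupport φ) (hsupp : tsupport φ ⊆ Metric.closedBall 0 R) (α : Fin 2) :
    ∫ y, (φ y) ^ 2 ≤ 4 * R ^ 2 * ∫ y, (pd α φ y) ^ 2 := by
  set d : E2 → ℝ := pd α φ with hd
  have hdc : Continuous d := (contDiff_pd hφ α).continuous
  have hdcs : HasCompactSupport d := hcs_pd hcs α
  have hφc : Continuous φ := hφ.continuous
  -- the auxiliary function
  set ψ : E2 → ℝ := fun x => (EuclideanSpace.proj α x) * (φ x * φ x) with hψ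
  have hψsm : ContDiff ℝ (⊤ : ℕ∞) ψ := ((EuclideanSpace.proj α).contDiff).mul (hφ.mul hφ)
  have hφφcs : HasCompactSupport (fun x => φ x * φ x) := hcs.mul_right
  have hψcs : HasCompactSupport ψ := HasCompactSupport.mul_left hφφcs
  -- pointwise derivative of ψ
  have hder : ∀ x : E2, pd α ψ x = φ x ^ 2 + (EuclideanSpace.proj α x) * (2 * φ x * d x) := by
    intro x
    have hφd : HasFDerivAt φ (fderiv ℝ φ x) x :=
      (hφ.differentiable (by simp) x).hasFDerivAt
    have hp : HasFDerivAt (fun y : E2 => (EuclideanSpace.proj α : E2 →L[ℝ] ℝ) y)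
        (EuclideanSpace.proj α : E2 →L[ℝ] ℝ) x :=
      (EuclideanSpace.proj α : E2 →L[ℝ] ℝ).hasFDerivAt
    have hm : HasFDerivAt (fun y => φ y * φ y)
        (φ x • fderiv ℝ φ x + φ x • fderiv ℝ φ x) x := hφd.mul hφd
    have hall : HasFDerivAt ψ
        ((EuclideanSpace.proj α x) • (φ x • fderiv ℝ φ x + φ x • fderiv ℝ φ x)
          + (φ x * φ x) • (EuclideanSpace.proj α : E2 →L[ℝ] ℝ)) x := hp.mul hm
    have : pd α ψ x = ((EuclideanSpace.proj α x) • (φ x • fderiv ℝ φ x + φ x • fderiv ℝ φ x)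
          + (φ x * φ x) • (EuclideanSpace.proj α : E2 →L[ℝ] ℝ)) (ee α) := by
      unfold pd
      rw [hall.fderiv]
    rw [this]
    have hproj : (EuclideanSpace.proj α : E2 →L[ℝ] ℝ) (ee α) = 1 := by
      show (ee α) α = 1
      simp [ee, EuclideanSpace.single_apply]
    simp only [ContinuousLinearMap.add_apply, ContinuousLinearMap.coe_smul',
      Pi.smul_apply, Pi.add_apply, ContinuousLinearMap.coe_add', smul_eq_mul, hproj]
    show _ = φ x ^ 2 + (EuclideanSpace.proj α) x * (2 * φ x * fderiv ℝ φ x (ee α))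
    ring
  -- integral identity
  have hint0 : ∫ x, pd α ψ x = 0 := integral_pd_zero' hψsm hψcs α
  have hintφ2 : Integrable (fun x => φ x ^ 2) :=
    ((hφc.mul hφc).integrable_of_hasCompactSupport hφφcs).congr
      (Filter.Eventually.of_forall (fun x => by simp only [Pi.mul_apply]; ring))
  have hint2 : Integrable (fun x => (EuclideanSpace.proj α x) * (2 * φ x * d x)) := by
    apply Continuous.integrable_of_hasCompactSupport
    · exact (EuclideanSpace.proj α).continuous.mul ((continuous_const.mul hφc).mul hdc)
    · apply HasCompactSupport.mul_left
      apply HasCompactSupport.mul_left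
      exact hdcs
  have hsplit : ∫ x, pd α ψ x = (∫ x, φ x ^ 2) + ∫ x, (EuclideanSpace.proj α x) * (2 * φ x * d x) := by
    rw [← integral_add hintφ2 hint2]
    congr 1; funext x; exact hder x
  have hA : ∫ x, φ x ^ 2 = - ∫ x, (EuclideanSpace.proj α x) * (2 * φ x * d x) := by
    rw [hsplit] at hint0; linarith
  -- pointwise bound
  have habs : |∫ x, (EuclideanSpace.proj α x) * (2 * φ x * d x)| ≤ 2 * R * ∫ x, |φ x| * |d x| := by
    have h1 : |∫ x, (EuclideanSpace.proj α x) * (2 * φ x * d x)|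
        ≤ ∫ x, |(EuclideanSpace.proj α x) * (2 * φ x * d x)| := by
      have := norm_integral_le_integral_norm (μ := (volume : Measure E2))
          (fun x => (EuclideanSpace.proj α x) * (2 * φ x * d x))
      simp only [Real.norm_eq_abs] at this
      exact this
    refine h1.trans ?_
    have h2 : ∀ x : E2, |(EuclideanSpace.proj α x) * (2 * φ x * d x)|
        ≤ 2 * R * (|φ x| * |d x|) := by
      intro x
      by_cases hx : φ x = 0
      · simp [hx]
      · have hmem : x ∈ Metric.closedBall (0:E2) R :=
          hsupp (subset_tsupport φ (by simpa [Function.mem_support] using hx))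
        have hxα : |EuclideanSpace.proj α x| ≤ R := by
          have h1 : ‖x‖ ≤ R := by simpa [dist_zero_right] using hmem
          exact le_trans (coord_le_norm x α) h1
        calc |(EuclideanSpace.proj α x) * (2 * φ x * d x)|
            = |EuclideanSpace.proj α x| * (2 * (|φ x| * |d x|)) := by
              rw [abs_mul, abs_mul, abs_mul, abs_two]; ring
        _ ≤ R * (2 * (|φ x| * |d x|)) := by
              apply mul_le_mul_of_nonneg_right hxα; positivity
        _ = 2 * R * (|φ x| * |d x|) := by ring
    have hint3 : Integrable (fun x => 2 * R * (|φ x| * |d x|)) := by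
      apply Integrable.const_mul
      exact ((hφc.abs.mul hdc.abs).integrable_of_hasCompactSupport
        (HasCompactSupport.mul_left hdcs.abs))
    calc ∫ x, |(EuclideanSpace.proj α x) * (2 * φ x * d x)|
        ≤ ∫ x, 2 * R * (|φ x| * |d x|) := by
          apply integral_mono_of_nonneg
          · exact Filter.Eventually.of_forall (fun x => abs_nonneg _)
          · exact hint3
          · exact Filter.Eventually.of_forall h2
    _ = 2 * R * ∫ x, |φ x| * |d x| := by rw [integral_const_mul]
  -- Cauchy-Schwarz
  have hcs2 : ∫ x, |φ x| * |d x| ≤ Real.sqrt (∫ x, φ x ^ 2) * Real.sqrt (∫ x, d x ^ 2) := by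
    have := cs_abs (volume : Measure E2) (f := fun x => |φ x|) (g := fun x => |d x|)
      (memL2_test hφc.abs hcs.abs) (memL2_test hdc.abs hdcs.abs)
    simp only [sq_abs] at this
    exact le_trans (le_abs_self _) this
  set A := ∫ x, φ x ^ 2 with hAdef
  set B := ∫ x, d x ^ 2 with hBdef
  have hAnn : 0 ≤ A := integral_nonneg (fun x => sq_nonneg _)
  have hBnn : 0 ≤ B := integral_nonneg (fun x => sq_nonneg _)
  have hfinal : A ≤ 2 * R * (Real.sqrt A * Real.sqrt B) := by
    calc A = - ∫ x, (EuclideanSpace.proj α x) * (2 * φ x * d x) := hA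
    _ ≤ |∫ x, (EuclideanSpace.proj α x) * (2 * φ x * d x)| := neg_le_abs _
    _ ≤ 2 * R * ∫ x, |φ x| * |d x| := habs
    _ ≤ 2 * R * (Real.sqrt A * Real.sqrt B) := by
          apply mul_le_mul_of_nonneg_left hcs2; positivity
  have hsA : Real.sqrt A ^ 2 = A := Real.sq_sqrt hAnn
  have hsB : Real.sqrt B ^ 2 = B := Real.sq_sqrt hBnn
  nlinarith [Real.sqrt_nonneg A, Real.sqrt_nonneg B, sq_nonneg (Real.sqrt A - 2 * R * Real.sqrt B),
    mul_nonneg (mul_nonneg hR (Real.sqrt_nonneg A)) (Real.sqrt_nonneg B)]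

lemma pd_zero_outside {ω : Set E2} {φ : E2 → ℝ} (hT : IsTest ω φ) (α : Fin 2) :
    ∀ x ∉ ω, pd α φ x = 0 := by
  intro x hx
  by_contra h
  have hx2 : fderiv ℝ φ x ≠ 0 := by
    intro h0
    apply h
    unfold pd
    rw [h0]
    rfl
  exact hx (hT.2.2 (support_fderiv_subset ℝ (by simpa [Function.mem_support] using hx2)))

lemma setIntegral_pd_eq {ω : Set E2} {φ : E2 → ℝ} (hT : IsTest ω φ) (α : Fin 2) :
    ∫ y in ω, pd α φ y = ∫ y, pd α φ y :=
  setIntegral_eq_integral_of_forall_compl_eq_zero (pd_zero_outside hT α)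

lemma setIntegral_pd_sq_eq {ω : Set E2} {φ : E2 → ℝ} (hT : IsTest ω φ) (α : Fin 2) :
    ∫ y in ω, (pd α φ y)^2 = ∫ y, (pd α φ y)^2 :=
  setIntegral_eq_integral_of_forall_compl_eq_zero
    (fun x hx => by rw [pd_zero_outside hT α x hx]; ring)

lemma test_memL2 {ω : Set E2} {φ : E2 → ℝ} (hT : IsTest ω φ) :
    MemLp φ 2 (volume.restrict ω) :=
  (memL2_test hT.1.continuous hT.2.1).restrict ω

lemma pd_test_memL2 {ω : Set E2} {φ : E2 → ℝ} (hT : IsTest ω φ) (α : Fin 2) :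
    MemLp (pd α φ) 2 (volume.restrict ω) :=
  (memL2_test (contDiff_pd hT.1 α).continuous (hcs_pd hT.2.1 α)).restrict ω

lemma pdpd_test_memL2 {ω : Set E2} {φ : E2 → ℝ} (hT : IsTest ω φ) (α β : Fin 2) :
    MemLp (pd β (pd α φ)) 2 (volume.restrict ω) :=
  (memL2_test (contDiff_pd (contDiff_pd hT.1 α) β).continuous
    (hcs_pd (hcs_pd hT.2.1 α) β)).restrict ω

/-- limit of integrals of pd of test functions is zero -/
lemma integral_lim_deriv_zero {ω : Set E2} [IsFiniteMeasure (volume.restrict ω)]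
    {d : E2 → ℝ} (hd : MemLp d 2 (volume.restrict ω)) {φ : ℕ → E2 → ℝ}
    (hT : ∀ n, IsTest ω (φ n)) (α : Fin 2)
    (hconv : Filter.Tendsto (fun n => ∫ y in ω, (d y - pd α (φ n) y)^2) Filter.atTop (𝓝 0)) :
    ∫ y in ω, d y = 0 := by
  have hpd0 : ∀ n, ∫ y in ω, pd α (φ n) y = 0 := fun n => by
    rw [setIntegral_pd_eq (hT n) α]
    exact integral_pd_zero' (hT n).1 (hT n).2.1 α
  have heq : ∀ n, ∫ y in ω, d y = ∫ y in ω, (d y - pd α (φ n) y) := by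
    intro n
    rw [integral_sub (hd.integrable one_le_two)
      ((pd_test_memL2 (hT n) α).integrable one_le_two), hpd0 n, sub_zero]
  have habs : ∀ n, |∫ y in ω, d y|
      ≤ Real.sqrt (∫ y in ω, (d y - pd α (φ n) y)^2) * Real.sqrt ((volume ω).toReal) := by
    intro n
    rw [heq n]
    have h1 := cs_abs (volume.restrict ω) (f := fun y => d y - pd α (φ n) y)
      (g := fun _ => (1:ℝ)) (hd.sub (pd_test_memL2 (hT n) α)) (memLp_const 1)
    simp only [mul_one, one_pow] at h1
    have h2 : ∫ (_ : E2) in ω, (1:ℝ) = (volume ω).toReal := by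
      simp [Measure.restrict_apply_univ, Measure.real]
    rw [h2] at h1
    exact h1
  have hlim : Filter.Tendsto
      (fun n => Real.sqrt (∫ y in ω, (d y - pd α (φ n) y)^2) * Real.sqrt ((volume ω).toReal))
      Filter.atTop (𝓝 0) := by
    have hs : Filter.Tendsto (fun n => Real.sqrt (∫ y in ω, (d y - pd α (φ n) y)^2))
        Filter.atTop (𝓝 0) := by
      have := (Real.continuous_sqrt.tendsto 0).comp hconv
      simpa [Function.comp_def] using this
    simpa using hs.mul_const (Real.sqrt ((volume ω).toReal))
  have : |∫ y in ω, d y| ≤ 0 := ge_of_tendsto' hlim habs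
  have := abs_nonneg (∫ y in ω, d y)
  have : |∫ y in ω, d y| = 0 := le_antisymm ‹_› ‹_›
  exact abs_eq_zero.mp this

/-- Poincaré: u is a.e. zero if one weak partial vanishes -/
lemma ae_zero_of_deriv_zero {ω : Set E2} [IsFiniteMeasure (volume.restrict ω)]
    {R : ℝ} (hR : 0 ≤ R) (hsub : ω ⊆ Metric.closedBall 0 R)
    {u g : E2 → ℝ} (hu : MemLp u 2 (volume.restrict ω)) {φ : ℕ → E2 → ℝ}
    (hT : ∀ n, IsTest ω (φ n)) (α : Fin 2)
    (hconvu : Filter.Tendsto (fun n => ∫ y in ω, (u y - φ n y)^2) Filter.atTop (𝓝 0))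
    (hconvg : Filter.Tendsto (fun n => ∫ y in ω, (g y - pd α (φ n) y)^2) Filter.atTop (𝓝 0))
    (hg0 : ∀ᵐ y ∂(volume.restrict ω), g y = 0) :
    ∀ᵐ y ∂(volume.restrict ω), u y = 0 := by
  have hconvp : Filter.Tendsto (fun n => ∫ y in ω, (pd α (φ n) y)^2) Filter.atTop (𝓝 0) := by
    apply hconvg.congr
    intro n
    apply integral_congr_ae
    filter_upwards [hg0] with y hy
    rw [hy]; ring
  have hbound : ∀ n, ∫ y in ω, (u y)^2
      ≤ 2 * (∫ y in ω, (u y - φ n y)^2) + 8 * R^2 * (∫ y in ω, (pd α (φ n) y)^2) := by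
    intro n
    have hsq1 : Integrable (fun y => (u y - φ n y)^2) (volume.restrict ω) :=
      (hu.sub (test_memL2 (hT n))).integrable_sq
    have hsq2 : Integrable (fun y => (φ n y)^2) (volume.restrict ω) :=
      (test_memL2 (hT n)).integrable_sq
    have step1 : ∫ y in ω, (u y)^2
        ≤ ∫ y in ω, (2 * (u y - φ n y)^2 + 2 * (φ n y)^2) := by
      apply integral_mono_of_nonneg
      · exact Filter.Eventually.of_forall (fun y => sq_nonneg _)
      · exact ((hsq1.const_mul 2).add (hsq2.const_mul 2))
      · refine Filter.Eventually.of_forall (fun y => ?_)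
        have hr : 2 * (u y - φ n y)^2 + 2 * (φ n y)^2 - (u y)^2 = (u y - 2 * φ n y)^2 := by ring
        have := sq_nonneg (u y - 2 * φ n y)
        simp only []
        linarith
    have step2 : ∫ y in ω, (2 * (u y - φ n y)^2 + 2 * (φ n y)^2)
        = 2 * (∫ y in ω, (u y - φ n y)^2) + 2 * ∫ y in ω, (φ n y)^2 := by
      rw [integral_add (hsq1.const_mul 2) (hsq2.const_mul 2),
        integral_const_mul, integral_const_mul]
    have step3 : ∫ y in ω, (φ n y)^2 ≤ 4 * R^2 * ∫ y in ω, (pd α (φ n) y)^2 := by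
      have hssub : tsupport (φ n) ⊆ Metric.closedBall 0 R := (hT n).2.2.trans hsub
      have hineq := poincare_test hR (hT n).1 (hT n).2.1 hssub α
      have e1 : ∫ y in ω, (φ n y)^2 ≤ ∫ y, (φ n y)^2 := by
        apply setIntegral_le_integral
        · exact ((hT n).1.continuous.mul (hT n).1.continuous).integrable_of_hasCompactSupport
            ((hT n).2.1.mul_right) |>.congr
            (Filter.Eventually.of_forall (fun x => by simp only [Pi.mul_apply]; ring))
        · exact Filter.Eventually.of_forall (fun y => sq_nonneg _)
      rw [← setIntegral_pd_sq_eq (hT n) α] at hineq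
      exact e1.trans hineq
    calc ∫ y in ω, (u y)^2 ≤ 2 * (∫ y in ω, (u y - φ n y)^2) + 2 * ∫ y in ω, (φ n y)^2 :=
          step1.trans_eq step2
    _ ≤ 2 * (∫ y in ω, (u y - φ n y)^2) + 2 * (4 * R^2 * ∫ y in ω, (pd α (φ n) y)^2) := by
        have := step3; linarith
    _ = 2 * (∫ y in ω, (u y - φ n y)^2) + 8 * R^2 * (∫ y in ω, (pd α (φ n) y)^2) := by ring
  have hlim : Filter.Tendsto
      (fun n => 2 * (∫ y in ω, (u y - φ n y)^2) + 8 * R^2 * (∫ y in ω, (pd α (φ n) y)^2))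
      Filter.atTop (𝓝 0) := by
    have h1 := hconvu.const_mul (2:ℝ)
    have h2 := hconvp.const_mul (8 * R^2)
    simpa using h1.add h2
  have hle : ∫ y in ω, (u y)^2 ≤ 0 := ge_of_tendsto' hlim hbound
  have hge : 0 ≤ ∫ y in ω, (u y)^2 := integral_nonneg (fun y => sq_nonneg _)
  have h0 : ∫ y in ω, (u y)^2 = 0 := le_antisymm hle hge
  have := (integral_eq_zero_iff_of_nonneg (fun y => sq_nonneg (u y)) hu.integrable_sq).mp h0
  filter_upwards [this] with y hy
  exact pow_eq_zero_iff (n := 2) (by norm_num) |>.mp hy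


set_option maxHeartbeats 1000000 in
lemma h10_extract {ω : Set E2} [IsFiniteMeasure (volume.restrict ω)] {u : E2 → ℝ}
    {g : Fin 2 → E2 → ℝ} (h : MemH10 ω u g) :
    ∃ φ : ℕ → E2 → ℝ, (∀ n, IsTest ω (φ n)) ∧
      Tendsto (fun n => ∫ y in ω, (u y - φ n y)^2) atTop (𝓝 0) ∧
      ∀ α, Tendsto (fun n => ∫ y in ω, (g α y - pd α (φ n) y)^2) atTop (𝓝 0) := by
  obtain ⟨hu, hg, -, φ, hT, hconv⟩ := h
  have i1 : ∀ n, Integrable (fun y => (u y - φ n y)^2) (volume.restrict ω) :=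
    fun n => (hu.sub (test_memL2 (hT n))).integrable_sq
  have i2 : ∀ n α, Integrable (fun y => (g α y - pd α (φ n) y)^2) (volume.restrict ω) :=
    fun n α => ((hg α).sub (pd_test_memL2 (hT n) α)).integrable_sq
  have hsplit : ∀ n, ∫ y in ω, ((u y - φ n y)^2 + ∑ α, (g α y - pd α (φ n) y)^2)
      = (∫ y in ω, (u y - φ n y)^2) + ((∫ y in ω, (g 0 y - pd 0 (φ n) y)^2)
        + (∫ y in ω, (g 1 y - pd 1 (φ n) y)^2)) := by
    intro n
    have e : (fun y => (u y - φ n y)^2 + ∑ α, (g α y - pd α (φ n) y)^2)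
        = fun y => (u y - φ n y)^2 + ((g 0 y - pd 0 (φ n) y)^2 + (g 1 y - pd 1 (φ n) y)^2) := by
      funext y; rw [Fin.sum_univ_two]
    have hY : Integrable (fun y => (g 0 y - pd 0 (φ n) y)^2 + (g 1 y - pd 1 (φ n) y)^2)
        (volume.restrict ω) := (i2 n 0).add (i2 n 1)
    rw [e, integral_add (i1 n) hY, integral_add (i2 n 0) (i2 n 1)]
  have hA : Tendsto (fun n => ∫ y in ω, (u y - φ n y)^2) atTop (𝓝 0) := by
    apply squeeze_zero (fun n => integral_nonneg (fun y => sq_nonneg _)) _ hconv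
    intro n
    rw [hsplit n]
    have := integral_nonneg (μ := volume.restrict ω) (f := fun y => (g 0 y - pd 0 (φ n) y)^2) (fun y => sq_nonneg (g 0 y - pd 0 (φ n) y))
    have := integral_nonneg (μ := volume.restrict ω) (f := fun y => (g 1 y - pd 1 (φ n) y)^2) (fun y => sq_nonneg (g 1 y - pd 1 (φ n) y))
    linarith
  have hB : ∀ α, Tendsto (fun n => ∫ y in ω, (g α y - pd α (φ n) y)^2) atTop (𝓝 0) := by
    intro α
    apply squeeze_zero (fun n => integral_nonneg (fun y => sq_nonneg _)) _ hconv
    intro n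
    rw [hsplit n]
    have n1 := integral_nonneg (μ := volume.restrict ω) (f := fun y => (u y - φ n y)^2) (fun y => sq_nonneg (u y - φ n y))
    have n2 := integral_nonneg (μ := volume.restrict ω) (f := fun y => (g 0 y - pd 0 (φ n) y)^2) (fun y => sq_nonneg (g 0 y - pd 0 (φ n) y))
    have n3 := integral_nonneg (μ := volume.restrict ω) (f := fun y => (g 1 y - pd 1 (φ n) y)^2) (fun y => sq_nonneg (g 1 y - pd 1 (φ n) y))
    fin_cases α
    · show (∫ y in ω, (g 0 y - pd 0 (φ n) y)^2) ≤ _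
      linarith
    · show (∫ y in ω, (g 1 y - pd 1 (φ n) y)^2) ≤ _
      linarith
  exact ⟨φ, hT, hA, hB⟩

set_option maxHeartbeats 1000000 in
lemma h20_extract {ω : Set E2} [IsFiniteMeasure (volume.restrict ω)] {u : E2 → ℝ}
    {g : Fin 2 → E2 → ℝ} {h : Fin 2 → Fin 2 → E2 → ℝ} (hm : MemH20 ω u g h) :
    ∃ φ : ℕ → E2 → ℝ, (∀ n, IsTest ω (φ n)) ∧
      Tendsto (fun n => ∫ y in ω, (u y - φ n y)^2) atTop (𝓝 0) ∧
      ∀ α, Tendsto (fun n => ∫ y in ω, (g α y - pd α (φ n) y)^2) atTop (𝓝 0) := by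
  obtain ⟨hu, hg, hh, -, -, φ, hT, hconv⟩ := hm
  have i1 : ∀ n, Integrable (fun y => (u y - φ n y)^2) (volume.restrict ω) :=
    fun n => (hu.sub (test_memL2 (hT n))).integrable_sq
  have i2 : ∀ n α, Integrable (fun y => (g α y - pd α (φ n) y)^2) (volume.restrict ω) :=
    fun n α => ((hg α).sub (pd_test_memL2 (hT n) α)).integrable_sq
  have i3 : ∀ n α β, Integrable (fun y => (h α β y - pd β (pd α (φ n)) y)^2) (volume.restrict ω) :=
    fun n α β => ((hh α β).sub (pdpd_test_memL2 (hT n) α β)).integrable_sq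
  have i4 : ∀ n, Integrable (fun y => ∑ α, ∑ β, (h α β y - pd β (pd α (φ n)) y)^2)
      (volume.restrict ω) := by
    intro n
    have e : (fun y => ∑ α, ∑ β, (h α β y - pd β (pd α (φ n)) y)^2)
        = fun y => ((h 0 0 y - pd 0 (pd 0 (φ n)) y)^2 + (h 0 1 y - pd 1 (pd 0 (φ n)) y)^2)
          + ((h 1 0 y - pd 0 (pd 1 (φ n)) y)^2 + (h 1 1 y - pd 1 (pd 1 (φ n)) y)^2) := by
      funext y; rw [Fin.sum_univ_two, Fin.sum_univ_two, Fin.sum_univ_two]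
    rw [e]
    exact ((i3 n 0 0).add (i3 n 0 1)).add ((i3 n 1 0).add (i3 n 1 1))
  have i4nn : ∀ n, 0 ≤ ∫ y in ω, ∑ α, ∑ β, (h α β y - pd β (pd α (φ n)) y)^2 :=
    fun n => integral_nonneg (fun y => Finset.sum_nonneg
      (fun α _ => Finset.sum_nonneg (fun β _ => sq_nonneg _)))
  have hsplit : ∀ n, ∫ y in ω, ((u y - φ n y)^2 + ∑ α, (g α y - pd α (φ n) y)^2
        + ∑ α, ∑ β, (h α β y - pd β (pd α (φ n)) y)^2)
      = ((∫ y in ω, (u y - φ n y)^2) + ((∫ y in ω, (g 0 y - pd 0 (φ n) y)^2)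
        + (∫ y in ω, (g 1 y - pd 1 (φ n) y)^2)))
        + ∫ y in ω, ∑ α, ∑ β, (h α β y - pd β (pd α (φ n)) y)^2 := by
    intro n
    have e : (fun y => (u y - φ n y)^2 + ∑ α, (g α y - pd α (φ n) y)^2
          + ∑ α, ∑ β, (h α β y - pd β (pd α (φ n)) y)^2)
        = fun y => ((u y - φ n y)^2 + ((g 0 y - pd 0 (φ n) y)^2 + (g 1 y - pd 1 (φ n) y)^2))
          + ∑ α, ∑ β, (h α β y - pd β (pd α (φ n)) y)^2 := by
      funext y; rw [Fin.sum_univ_two]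
    have hY : Integrable (fun y => (g 0 y - pd 0 (φ n) y)^2 + (g 1 y - pd 1 (φ n) y)^2)
        (volume.restrict ω) := (i2 n 0).add (i2 n 1)
    have hX : Integrable (fun y => (u y - φ n y)^2
        + ((g 0 y - pd 0 (φ n) y)^2 + (g 1 y - pd 1 (φ n) y)^2)) (volume.restrict ω) :=
      (i1 n).add hY
    rw [e, integral_add hX (i4 n), integral_add (i1 n) hY, integral_add (i2 n 0) (i2 n 1)]
  have hA : Tendsto (fun n => ∫ y in ω, (u y - φ n y)^2) atTop (𝓝 0) := by
    apply squeeze_zero (fun n => integral_nonneg (fun y => sq_nonneg _)) _ hconv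
    intro n
    rw [hsplit n]
    have := integral_nonneg (μ := volume.restrict ω) (f := fun y => (g 0 y - pd 0 (φ n) y)^2) (fun y => sq_nonneg (g 0 y - pd 0 (φ n) y))
    have := integral_nonneg (μ := volume.restrict ω) (f := fun y => (g 1 y - pd 1 (φ n) y)^2) (fun y => sq_nonneg (g 1 y - pd 1 (φ n) y))
    have := i4nn n
    linarith
  have hB : ∀ α, Tendsto (fun n => ∫ y in ω, (g α y - pd α (φ n) y)^2) atTop (𝓝 0) := by
    intro α
    apply squeeze_zero (fun n => integral_nonneg (fun y => sq_nonneg _)) _ hconv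
    intro n
    rw [hsplit n]
    have n1 := integral_nonneg (μ := volume.restrict ω) (f := fun y => (u y - φ n y)^2) (fun y => sq_nonneg (u y - φ n y))
    have n2 := integral_nonneg (μ := volume.restrict ω) (f := fun y => (g 0 y - pd 0 (φ n) y)^2) (fun y => sq_nonneg (g 0 y - pd 0 (φ n) y))
    have n3 := integral_nonneg (μ := volume.restrict ω) (f := fun y => (g 1 y - pd 1 (φ n) y)^2) (fun y => sq_nonneg (g 1 y - pd 1 (φ n) y))
    have n4 := i4nn n
    fin_cases α
    · show (∫ y in ω, (g 0 y - pd 0 (φ n) y)^2) ≤ _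
      linarith
    · show (∫ y in ω, (g 1 y - pd 1 (φ n) y)^2) ≤ _
      linarith
  exact ⟨φ, hT, hA, hB⟩

/-- Lemma 3.1, rigidity property of plates: if `u ∈ V(ω)` satisfies
`E⁰_{αβ}(u) = 0` a.e. in `ω` for all `α, β`, then `u = 0` in `ω`. -/
theorem rigidity_of_plates (ω : Set E2) (hω : IsNiceDomain ω)
    (v : Disp) (hv : MemV ω v)
    (hE : ∀ α β : Fin 2, ∀ᵐ y ∂(volume.restrict ω), E0d v α β y = 0) :
    ∀ i : Fin 3, ∀ᵐ y ∂(volume.restrict ω), v.u i y = 0 := by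
  obtain ⟨hopen, hconn, hbdd, hlip⟩ := hω
  obtain ⟨R0, hsub0⟩ := hbdd.subset_closedBall 0
  have hR : (0:ℝ) ≤ max R0 0 := le_max_right _ _
  have hsub : ω ⊆ Metric.closedBall 0 (max R0 0) :=
    hsub0.trans (Metric.closedBall_subset_closedBall (le_max_left _ _))
  have hfin : volume ω ≠ ⊤ :=
    (lt_of_le_of_lt (measure_mono hsub) measure_closedBall_lt_top).ne
  haveI : IsFiniteMeasure (volume.restrict ω) :=
    ⟨by rw [Measure.restrict_apply_univ]; exact hfin.lt_top⟩
  obtain ⟨hmem1, hmem3⟩ := hv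
  obtain ⟨φ0, hT0, hcu0, hcg0⟩ := h10_extract (hmem1 0)
  obtain ⟨φ1, hT1, hcu1, hcg1⟩ := h10_extract (hmem1 1)
  obtain ⟨φ2, hT2, hcu2, hcg2⟩ := h20_extract hmem3
  -- diagonal strain identity
  have hdiag : ∀ α : Fin 2, ∀ᵐ y ∂(volume.restrict ω),
      v.du α.castSucc α y = -(1/2) * (v.du 2 α y)^2 := by
    intro α
    filter_upwards [hE α α] with y hy
    unfold E0d at hy
    nlinarith [hy]
  -- integral of the diagonal weak derivatives vanishes
  have hint0 : ∫ y in ω, v.du (0:Fin 2).castSucc 0 y = 0 :=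
    integral_lim_deriv_zero ((hmem1 0).2.1 0) hT0 0 (hcg0 0)
  have hint1 : ∫ y in ω, v.du (1:Fin 2).castSucc 1 y = 0 :=
    integral_lim_deriv_zero ((hmem1 1).2.1 1) hT1 1 (hcg1 1)
  have hint_diag : ∀ α : Fin 2, ∫ y in ω, v.du α.castSucc α y = 0 := by
    intro α
    fin_cases α
    · exact hint0
    · exact hint1
  -- the transverse weak gradient vanishes a.e.
  have hdu2 : ∀ α : Fin 2, ∀ᵐ y ∂(volume.restrict ω), v.du 2 α y = 0 := by
    intro α
    have hsq : ∫ y in ω, (v.du 2 α y)^2 = 0 := by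
      have e : ∫ y in ω, (v.du 2 α y)^2 = ∫ y in ω, (-2) * v.du α.castSucc α y := by
        apply integral_congr_ae
        filter_upwards [hdiag α] with y hy
        rw [hy]; ring
      rw [e, integral_const_mul, hint_diag α]; ring
    have := (integral_eq_zero_iff_of_nonneg (fun y => sq_nonneg (v.du 2 α y))
      (hmem3.2.1 α).integrable_sq).mp hsq
    filter_upwards [this] with y hy
    exact pow_eq_zero_iff (n := 2) (by norm_num) |>.mp hy
  -- the diagonal in-plane weak derivatives vanish a.e.
  have hdual : ∀ α : Fin 2, ∀ᵐ y ∂(volume.restrict ω), v.du α.castSucc α y = 0 := by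
    intro α
    filter_upwards [hdiag α, hdu2 α] with y h1 h2
    rw [h1, h2]; ring
  -- apply the Poincaré argument to the three components
  have hz0 : ∀ᵐ y ∂(volume.restrict ω), v.u (0:Fin 2).castSucc y = 0 :=
    ae_zero_of_deriv_zero hR hsub (hmem1 0).1 hT0 0 hcu0 (hcg0 0) (hdual 0)
  have hz1 : ∀ᵐ y ∂(volume.restrict ω), v.u (1:Fin 2).castSucc y = 0 :=
    ae_zero_of_deriv_zero hR hsub (hmem1 1).1 hT1 1 hcu1 (hcg1 1) (hdual 1)
  have hz2 : ∀ᵐ y ∂(volume.restrict ω), v.u 2 y = 0 :=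
    ae_zero_of_deriv_zero hR hsub hmem3.1 hT2 0 hcu2 (hcg2 0) (hdu2 0)
  intro i
  fin_cases i
  · exact hz0
  · exact hz1
  · exact hz2
end
end

section
/- Uniform positive-definiteness near the plate: let θ₀(y) := (y,0) and let (θ_n)_n be a sequence of C² immersions with ‖θ_n − θ₀‖_{C²(ω̄)} < 1/n. Then there exist N₁ > 0 and constants C_e > 0 and C₁ > 0 such that for every n > N₁, every y ∈ ω̄, and every symmetric 2×2 matrix (t_{αβ}): C_e Σ_{α,β} |t_{αβ}|² ≤ a^{αβστ}_{θ_n}(y) t_{στ} t_{αβ} √(a_{θ_n}(y)) and √(a_{θ_n}(y)) ≤ C₁. -/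
open MeasureTheory Filter Topology Matrix

noncomputable section

lemma coord_fderiv (j : Fin 2) (y : E2) (v : E2) :
    fderiv ℝ (fun x : E2 => x j) y v = v j := by
  rw [show (fun x : E2 => x j) = ⇑(EuclideanSpace.proj (𝕜:=ℝ) j) from rfl,
    ContinuousLinearMap.fderiv]
  simp

lemma coord_contDiff (j : Fin 2) : ContDiff ℝ 2 (fun x : E2 => x j) := by
  rw [show (fun x : E2 => x j) = ⇑(EuclideanSpace.proj (𝕜:=ℝ) j) from rfl]
  exact (EuclideanSpace.proj (𝕜:=ℝ) j).contDiff

lemma theta0_comp_contDiff (i : Fin 3) : ContDiff ℝ 2 (fun x : E2 => θ0 x i) := by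
  fin_cases i
  · simpa [θ0] using coord_contDiff 0
  · simpa [θ0] using coord_contDiff 1
  · simpa [θ0] using contDiff_const (c := (0:ℝ))

lemma pdv_theta0 (α : Fin 2) (y : E2) :
    pdv α θ0 y = ![if α = 0 then 1 else 0, if α = 1 then 1 else 0, 0] := by
  funext i
  have h0 : (fun x : E2 => θ0 x 0) = fun x : E2 => x 0 := by funext x; simp [θ0]
  have h1 : (fun x : E2 => θ0 x 1) = fun x : E2 => x 1 := by funext x; simp [θ0]
  have h2 : (fun x : E2 => θ0 x 2) = fun _ : E2 => (0:ℝ) := by funext x; simp [θ0]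
  fin_cases i <;> fin_cases α <;>
    simp [pdv, h0, h1, h2, coord_fderiv, ee, EuclideanSpace.single_apply, fderiv_const]

lemma comp_contDiff {θ : E2 → V3} (hθ : ContDiff ℝ 2 θ) (i : Fin 3) :
    ContDiff ℝ 2 (fun x : E2 => θ x i) := contDiff_pi.1 hθ i

lemma pdv_sub {θ η : E2 → V3} (hθ : ContDiff ℝ 2 θ) (hη : ContDiff ℝ 2 η)
    (α : Fin 2) (y : E2) (i : Fin 3) :
    pdv α (vsub θ η) y i = pdv α θ y i - pdv α η y i := by
  have h1 : DifferentiableAt ℝ (fun x : E2 => θ x i) y :=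
    ((comp_contDiff hθ i).differentiable (by norm_num)).differentiableAt
  have h2 : DifferentiableAt ℝ (fun x : E2 => η x i) y :=
    ((comp_contDiff hη i).differentiable (by norm_num)).differentiableAt
  have : (fun x : E2 => vsub θ η x i) = fun x : E2 => θ x i - η x i := rfl
  simp only [pdv, this, fderiv_fun_sub h1 h2, ContinuousLinearMap.sub_apply]

lemma norm3_nonneg (v : V3) : 0 ≤ norm3 v := Real.sqrt_nonneg _

lemma vC0_nonneg (ω : Set E2) (f : E2 → V3) : 0 ≤ vC0 ω f :=
  Real.sSup_nonneg (by rintro x ⟨y, -, rfl⟩; exact norm3_nonneg _)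

lemma pdv_continuous {θ : E2 → V3} (hθ : ContDiff ℝ 2 θ) (α : Fin 2) (i : Fin 3) :
    Continuous (fun y => pdv α θ y i) := by
  have h1 : Continuous (fderiv ℝ (fun x : E2 => θ x i)) :=
    (comp_contDiff hθ i).continuous_fderiv (by norm_num)
  exact h1.clm_apply continuous_const

lemma norm3_continuous {f : E2 → V3} (hf : ∀ i, Continuous (fun y => f y i)) :
    Continuous (fun y => norm3 (f y)) := by
  apply Real.continuous_sqrt.comp
  exact continuous_finset_sum _ (fun i _ => (hf i).mul (hf i))

lemma le_vC0 (ω : Set E2) (hb : Bornology.IsBounded ω) {f : E2 → V3}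
    (hf : ∀ i, Continuous (fun y => f y i)) {y : E2} (hy : y ∈ closure ω) :
    norm3 (f y) ≤ vC0 ω f := by
  apply le_csSup _ (Set.mem_image_of_mem _ hy)
  exact hb.isCompact_closure.bddAbove_image (norm3_continuous hf).continuousOn

lemma comp_le_norm3 (v : V3) (i : Fin 3) : |v i| ≤ norm3 v := by
  have h : v i ^ 2 ≤ dot3 v v := by
    rw [sq]
    exact Finset.single_le_sum (fun j _ => mul_self_nonneg (v j)) (Finset.mem_univ i)
  have h2 : |v i| = Real.sqrt (v i ^ 2) := (Real.sqrt_sq_eq_abs _).symm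
  rw [h2, norm3]
  exact Real.sqrt_le_sqrt h

set_option maxHeartbeats 1000000 in
theorem lem_e (x b z p q r : ℝ) (ha : x^2 ≤ 1/2500) (hb : b^2 ≤ 1/2500) (hc : z^2 ≤ 1/2500) :
    (3:ℝ)/10 * (p^2 + 2*q^2 + r^2) ≤ ((1+x)*p+b*q)^2 + 2*((1+x)*q+b*r)*(b*p+(1+z)*q) + (b*q+(1+z)*r)^2 := by
  have key : ((1+x)*p+b*q)^2 + 2*((1+x)*q+b*r)*(b*p+(1+z)*q) + (b*q+(1+z)*r)^2
      = ((1+x)*p+b*q)^2 + ((1+x)*q+b*r)^2 + (b*p+(1+z)*q)^2 + (b*q+(1+z)*r)^2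
        - ((x-z)*q + b*(r-p))^2 := by ring
  rw [key, show (b*p+(1+z)*q)^2 = ((1+z)*q + b*p)^2 by ring,
    show (b*q+(1+z)*r)^2 = ((1+z)*r + b*q)^2 by ring]
  have half : ∀ u v : ℝ, u^2/2 - v^2 ≤ (u+v)^2 := by
    intro u v; nlinarith [sq_nonneg (u + 2*v)]
  have h1 := half ((1+x)*p) (b*q)
  have h2 := half ((1+x)*q) (b*r)
  have h3 := half ((1+z)*q) (b*p)
  have h4 := half ((1+z)*r) (b*q)
  have hx' : -(2/50 : ℝ) ≤ 2*x := by nlinarith [sq_nonneg (x + 1/50)]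
  have hz' : -(2/50 : ℝ) ≤ 2*z := by nlinarith [sq_nonneg (z + 1/50)]
  have hlb : ∀ w u : ℝ, -(2/50:ℝ) ≤ 2*w → 96/100*u^2 ≤ ((1+w)*u)^2 := by
    intro w u hw
    nlinarith [mul_nonneg (by linarith : (0:ℝ) ≤ 2*w + 2/50) (sq_nonneg u),
      mul_nonneg (sq_nonneg w) (sq_nonneg u)]
  have hxp := hlb x p hx'
  have hxq := hlb x q hx'
  have hzq := hlb z q hz'
  have hzr := hlb z r hz'
  have hub : ∀ u : ℝ, ∀ w : ℝ, w^2 ≤ 1/2500 → (w*u)^2 ≤ (1/2500)*u^2 := by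
    intro u w hw
    nlinarith [mul_nonneg (by linarith : (0:ℝ) ≤ 1/2500 - w^2) (sq_nonneg u)]
  have hbp := hub p b hb
  have hbq := hub q b hb
  have hbr := hub r b hb
  have hk : ((x-z)*q + b*(r-p))^2 ≤ 2*((x-z)*q)^2 + 2*(b*(r-p))^2 := by
    nlinarith [sq_nonneg ((x-z)*q - b*(r-p))]
  have hxz : (x-z)^2 ≤ 4/2500 := by nlinarith [sq_nonneg (x+z)]
  have hk1 : ((x-z)*q)^2 ≤ (4/2500)*q^2 := by
    nlinarith [mul_nonneg (by linarith : (0:ℝ) ≤ 4/2500 - (x-z)^2) (sq_nonneg q)]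
  have hk2 : (b*(r-p))^2 ≤ (1/2500)*(2*r^2+2*p^2) := by
    have := hub (r-p) b hb
    nlinarith [sq_nonneg (r+p)]
  linarith [sq_nonneg p, sq_nonneg q, sq_nonneg r]


lemma sq_bound {a e : ℝ} (h : |a| ≤ e) : a*a ≤ e*e := by
  rw [← abs_mul_abs_self]; exact mul_le_mul h h (abs_nonneg _) ((abs_nonneg a).trans h)

lemma abs_mul_bound {a b ea eb : ℝ} (ha : |a| ≤ ea) (hb : |b| ≤ eb) : |a*b| ≤ ea*eb := by
  rw [abs_mul]; exact mul_le_mul ha hb (abs_nonneg _) ((abs_nonneg a).trans ha)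

set_option maxHeartbeats 1000000 in
theorem key_alg (a b c s lam mu : ℝ) (hlam : 0 ≤ lam) (hmu : 0 < mu)
    (hb11 : |a - 1| ≤ 1/100) (hb12 : |b| ≤ 1/100) (hb22 : |c - 1| ≤ 1/100)
    (hs1 : 9/10 ≤ s) (t : Matrix (Fin 2) (Fin 2) ℝ) (ht : t.IsSymm) :
    mu * ∑ α, ∑ β, (t α β) ^ 2 ≤
      (∑ α, ∑ β, ∑ σ, ∑ τ,
        (4*lam*mu/(lam+2*mu) * (!![a,b;b,c])⁻¹ α β * (!![a,b;b,c])⁻¹ σ τ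
          + 2*mu*((!![a,b;b,c])⁻¹ α σ * (!![a,b;b,c])⁻¹ β τ
            + (!![a,b;b,c])⁻¹ α τ * (!![a,b;b,c])⁻¹ β σ)) * t σ τ * t α β) * s := by
  have ha' := abs_le.1 hb11
  have hb' := abs_le.1 hb12
  have hc' := abs_le.1 hb22
  set d := a*c - b*b with hddef
  have hdpos : 97/100 ≤ d := by
    have h1 := abs_le.1 (abs_mul_bound hb11 hb22)
    have h2 := sq_bound hb12
    have he : d = 1 + (a-1) + (c-1) + (a-1)*(c-1) - b*b := by rw [hddef]; ring
    rw [he]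
    linarith only [h1, h2, ha', hc', mul_self_nonneg b]
  have hdne : d ≠ 0 := by intro h; rw [h] at hdpos; norm_num at hdpos
  have hinv : (!![a,b;b,c])⁻¹ = !![c/d, -b/d; -b/d, a/d] := by
    apply Matrix.inv_eq_right_inv
    ext i j
    fin_cases i <;> fin_cases j <;>
      simp [Matrix.mul_apply, Fin.sum_univ_two, Matrix.one_apply] <;>
      field_simp <;> (try rw [hddef]) <;> ring
  -- entry bounds for the inverse
  have habs_c : |c| ≤ 101/100 := by rw [abs_le]; constructor <;> linarith only [hc']
  have habs_a : |a| ≤ 101/100 := by rw [abs_le]; constructor <;> linarith only [ha']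
  have hnum22 : |c - d| ≤ 11/1000 := by
    have h1 := abs_le.1 (abs_mul_bound habs_c hb11)
    have h2 := sq_bound hb12
    have he : c - d = -(c*(a-1)) + b*b := by rw [hddef]; ring
    rw [he, abs_le]; constructor <;> linarith only [h1, h2, mul_self_nonneg b]
  have hnum11 : |a - d| ≤ 11/1000 := by
    have h1 := abs_le.1 (abs_mul_bound habs_a hb22)
    have h2 := sq_bound hb12
    have he : a - d = -(a*(c-1)) + b*b := by rw [hddef]; ring
    rw [he, abs_le]; constructor <;> linarith only [h1, h2, mul_self_nonneg b]
  have hd2 : (97/100:ℝ)^2 ≤ d^2 := by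
    apply pow_le_pow_left₀ (by norm_num) hdpos
  have hfrac : ∀ w : ℝ, |w| ≤ 11/1000 → (w/d)^2 ≤ 1/2500 := by
    intro w hw
    rw [div_pow]
    have h1 : w^2 ≤ (11/1000:ℝ)^2 := sq_le_sq' (by linarith only [(abs_le.1 hw).1]) (abs_le.1 hw).2
    calc w^2/d^2 ≤ (11/1000:ℝ)^2/((97/100:ℝ)^2) :=
          div_le_div₀ (by positivity) h1 (by positivity) hd2
      _ ≤ 1/2500 := by norm_num
  have hx2 : ((c - d)/d)^2 ≤ 1/2500 := hfrac _ hnum22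
  have hz2 : ((a - d)/d)^2 ≤ 1/2500 := hfrac _ hnum11
  have hbb2 : (-b/d)^2 ≤ 1/2500 := by
    have := hfrac (-b) (by rw [abs_neg]; exact hb12.trans (by norm_num))
    simpa using this
  have hq10 : t 1 0 = t 0 1 := congrFun (congrFun ht 0) 1
  have hXx : c/d = 1 + (c-d)/d := by field_simp; ring
  have hZz : a/d = 1 + (a-d)/d := by field_simp; ring
  have hc1 : 0 ≤ 4*lam*mu/(lam+2*mu) :=
    div_nonneg (by nlinarith only [hlam, hmu]) (by linarith only [hlam, hmu])
  set pp := t 0 0 with hppd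
  set qq := t 0 1 with hqqd
  set rr := t 1 1 with hrrd
  set X := c/d with hXd
  set B := -b/d with hBd
  set Z := a/d with hZd
  have hsum : (∑ α, ∑ β, ∑ σ, ∑ τ,
        (4*lam*mu/(lam+2*mu) * (!![a,b;b,c])⁻¹ α β * (!![a,b;b,c])⁻¹ σ τ
          + 2*mu*((!![a,b;b,c])⁻¹ α σ * (!![a,b;b,c])⁻¹ β τ
            + (!![a,b;b,c])⁻¹ α τ * (!![a,b;b,c])⁻¹ β σ)) * t σ τ * t α β)
      = 4*lam*mu/(lam+2*mu) * (X*pp + 2*B*qq + Z*rr)^2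
        + 4*mu*((X*pp+B*qq)^2 + 2*(X*qq+B*rr)*(B*pp+Z*qq) + (B*qq+Z*rr)^2) := by
    simp only [Fin.sum_univ_two, hinv, Matrix.of_apply, Matrix.cons_val',
      Matrix.cons_val_zero, Matrix.cons_val_one, Matrix.head_cons, Matrix.empty_val',
      Matrix.cons_val_fin_one, Matrix.head_fin_const, hq10, ← hXd, ← hBd, ← hZd,
      ← hppd, ← hqqd, ← hrrd]
    ring
  have hE := lem_e ((c-d)/d) B ((a-d)/d) pp qq rr hx2 hbb2 hz2
  rw [← hXx] at hE
  rw [← hZz] at hE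
  have hfin : (∑ α, ∑ β, (t α β)^2) = pp^2 + qq^2 + qq^2 + rr^2 := by
    simp only [Fin.sum_univ_two, hq10, ← hppd, ← hqqd, ← hrrd]
    ring
  rw [hfin, hsum]
  have hT : 0 ≤ 4*lam*mu/(lam+2*mu) * (X*pp + 2*B*qq + Z*rr)^2 := mul_nonneg hc1 (sq_nonneg _)
  have hsumnn : (0:ℝ) ≤ pp^2 + 2*qq^2 + rr^2 := by positivity
  have hE4 := mul_le_mul_of_nonneg_left hE (by linarith only [hmu] : (0:ℝ) ≤ 4*mu)
  set S := 4*lam*mu/(lam+2*mu) * (X*pp + 2*B*qq + Z*rr)^2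
    + 4*mu*((X*pp+B*qq)^2 + 2*(X*qq+B*rr)*(B*pp+Z*qq) + (B*qq+Z*rr)^2) with hSd
  clear_value S
  have hSlow : 12/10*mu*(pp^2 + 2*qq^2 + rr^2) ≤ S := by
    rw [hSd]; linarith only [hT, hE4]
  have hSnn : 0 ≤ S := le_trans (by positivity) hSlow
  have h8 : S * (9/10) ≤ S * s := mul_le_mul_of_nonneg_left hs1 hSnn
  have h9 := mul_le_mul_of_nonneg_right hSlow (by norm_num : (0:ℝ) ≤ 9/10)
  linarith only [h8, h9, mul_nonneg hmu.le hsumnn]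

set_option maxHeartbeats 1000000 in
theorem key_pt (θ : E2 → V3) (y : E2) (lam mu : ℝ) (hlam : 0 ≤ lam) (hmu : 0 < mu)
    (h0 : ∀ i : Fin 3, |pdv 0 θ y i - ![(1:ℝ),0,0] i| ≤ 1/300)
    (h1 : ∀ i : Fin 3, |pdv 1 θ y i - ![(0:ℝ),1,0] i| ≤ 1/300) :
    (∀ t : Matrix (Fin 2) (Fin 2) ℝ, t.IsSymm →
      mu * ∑ α, ∑ β, (t α β) ^ 2 ≤
        (∑ α, ∑ β, ∑ σ, ∑ τ, A4 θ lam mu α β σ τ y * t σ τ * t α β) * Real.sqrt (aDet θ y)) ∧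
    Real.sqrt (aDet θ y) ≤ 2 := by
  have hp0 : |pdv 0 θ y 0 - 1| ≤ 1/300 := by simpa using h0 0
  have hp1 : |pdv 0 θ y 1| ≤ 1/300 := by simpa using h0 1
  have hp2 : |pdv 0 θ y 2| ≤ 1/300 := by simpa using h0 2
  have hq0 : |pdv 1 θ y 0| ≤ 1/300 := by simpa using h1 0
  have hq1 : |pdv 1 θ y 1 - 1| ≤ 1/300 := by simpa using h1 1
  have hq2 : |pdv 1 θ y 2| ≤ 1/300 := by simpa using h1 2
  obtain ⟨p0, hp0d⟩ : ∃ v, pdv 0 θ y 0 = v := ⟨_, rfl⟩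
  obtain ⟨p1, hp1d⟩ : ∃ v, pdv 0 θ y 1 = v := ⟨_, rfl⟩
  obtain ⟨p2, hp2d⟩ : ∃ v, pdv 0 θ y 2 = v := ⟨_, rfl⟩
  obtain ⟨q0, hq0d⟩ : ∃ v, pdv 1 θ y 0 = v := ⟨_, rfl⟩
  obtain ⟨q1, hq1d⟩ : ∃ v, pdv 1 θ y 1 = v := ⟨_, rfl⟩
  obtain ⟨q2, hq2d⟩ : ∃ v, pdv 1 θ y 2 = v := ⟨_, rfl⟩
  rw [hp0d] at hp0; rw [hp1d] at hp1; rw [hp2d] at hp2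
  rw [hq0d] at hq0; rw [hq1d] at hq1; rw [hq2d] at hq2
  have hp0a : |p0| ≤ 301/300 := by rw [abs_le]; constructor <;> linarith [abs_le.1 hp0]
  have hq1a : |q1| ≤ 301/300 := by rw [abs_le]; constructor <;> linarith [abs_le.1 hq1]
  -- aDet
  have hdet : aDet θ y = (p1*q2 - p2*q1)*(p1*q2 - p2*q1) + (p2*q0 - p0*q2)*(p2*q0 - p0*q2)
      + (p0*q1 - p1*q0)*(p0*q1 - p1*q0) := by
    simp [aDet, cross3, dot3, Fin.sum_univ_three, hp0d, hp1d, hp2d, hq0d, hq1d, hq2d]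
  have hc0 : |p1*q2 - p2*q1| ≤ 1/100 := by
    have := (abs_sub _ _).trans (add_le_add (abs_mul_bound hp1 hq2) (abs_mul_bound hp2 hq1a))
    apply this.trans; norm_num
  have hc1 : |p2*q0 - p0*q2| ≤ 1/100 := by
    have := (abs_sub _ _).trans (add_le_add (abs_mul_bound hp2 hq0) (abs_mul_bound hp0a hq2))
    apply this.trans; norm_num
  have hc2a : |p0*q1 - p1*q0| ≤ 102/100 := by
    have := (abs_sub _ _).trans (add_le_add (abs_mul_bound hp0a hq1a) (abs_mul_bound hp1 hq0))
    apply this.trans; norm_num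
  have hc2b : 98/100 ≤ p0*q1 - p1*q0 := by
    have h5 : (299:ℝ)/300 * (299/300) ≤ p0 * q1 := by
      apply mul_le_mul (by linarith [abs_le.1 hp0]) (by linarith [abs_le.1 hq1]) (by norm_num)
      linarith [abs_le.1 hp0]
    have h6 : p1*q0 ≤ 1/300 * (1/300) := (le_abs_self _).trans (abs_mul_bound hp1 hq0)
    linarith only [h5, h6]
  have hdle : aDet θ y ≤ 4 := by
    rw [hdet]
    linarith only [sq_bound hc0, sq_bound hc1, sq_bound hc2a]
  have hdge : 81/100 ≤ aDet θ y := by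
    rw [hdet]
    nlinarith [mul_self_nonneg (p1*q2 - p2*q1), mul_self_nonneg (p2*q0 - p0*q2), hc2b]
  have hsqle : Real.sqrt (aDet θ y) ≤ 2 := by
    have := Real.sqrt_le_sqrt hdle
    rwa [show (4:ℝ) = 2^2 by norm_num, Real.sqrt_sq (by norm_num : (0:ℝ) ≤ 2)] at this
  have hsqge : 9/10 ≤ Real.sqrt (aDet θ y) := by
    have := Real.sqrt_le_sqrt hdge
    rwa [show (81:ℝ)/100 = (9/10)^2 by norm_num, Real.sqrt_sq (by norm_num : (0:ℝ) ≤ 9/10)] at this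
  refine ⟨?_, hsqle⟩
  -- aMat entries
  have ha11 : aMat θ y 0 0 = p0*p0 + p1*p1 + p2*p2 := by
    simp [aMat, dot3, Fin.sum_univ_three, hp0d, hp1d, hp2d]
  have ha12 : aMat θ y 0 1 = p0*q0 + p1*q1 + p2*q2 := by
    simp [aMat, dot3, Fin.sum_univ_three, hp0d, hp1d, hp2d, hq0d, hq1d, hq2d]
  have ha21 : aMat θ y 1 0 = p0*q0 + p1*q1 + p2*q2 := by
    simp [aMat, dot3, Fin.sum_univ_three, hp0d, hp1d, hp2d, hq0d, hq1d, hq2d]; ring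
  have ha22 : aMat θ y 1 1 = q0*q0 + q1*q1 + q2*q2 := by
    simp [aMat, dot3, Fin.sum_univ_three, hq0d, hq1d, hq2d]
  have hb11 : |aMat θ y 0 0 - 1| ≤ 1/100 := by
    have e11 : aMat θ y 0 0 - 1 = (p0-1)*(p0-1) + 2*(p0-1) + p1*p1 + p2*p2 := by
      rw [ha11]; ring
    rw [abs_le]; constructor <;>
      (rw [show aMat θ y 0 0 - 1 = (p0-1)*(p0-1) + 2*(p0-1) + p1*p1 + p2*p2 from e11];
       linarith only [sq_bound hp0, sq_bound hp1, sq_bound hp2, abs_le.1 hp0,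
        mul_self_nonneg (p0-1), mul_self_nonneg p1, mul_self_nonneg p2])
  have hb22 : |aMat θ y 1 1 - 1| ≤ 1/100 := by
    have e22 : aMat θ y 1 1 - 1 = (q1-1)*(q1-1) + 2*(q1-1) + q0*q0 + q2*q2 := by
      rw [ha22]; ring
    rw [abs_le]; constructor <;>
      (rw [show aMat θ y 1 1 - 1 = (q1-1)*(q1-1) + 2*(q1-1) + q0*q0 + q2*q2 from e22];
       linarith only [sq_bound hq1, sq_bound hq0, sq_bound hq2, abs_le.1 hq1,
        mul_self_nonneg (q1-1), mul_self_nonneg q0, mul_self_nonneg q2])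
  have hb12 : |aMat θ y 0 1| ≤ 1/100 := by
    rw [ha12]
    have := (abs_add_le (p0*q0 + p1*q1) (p2*q2)).trans (add_le_add ((abs_add_le (p0*q0) (p1*q1)).trans
      (add_le_add (abs_mul_bound hp0a hq0) (abs_mul_bound hp1 hq1a))) (abs_mul_bound hp2 hq2))
    apply this.trans; norm_num
  have hsym : aMat θ y 1 0 = aMat θ y 0 1 := by rw [ha21, ha12]
  have hM : aMat θ y = !![aMat θ y 0 0, aMat θ y 0 1; aMat θ y 0 1, aMat θ y 1 1] := by
    ext i j
    fin_cases i <;> fin_cases j <;> simp [hsym]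
  intro t ht
  have hA4 : ∀ α β σ τ : Fin 2, A4 θ lam mu α β σ τ y
      = 4*lam*mu/(lam+2*mu) * (!![aMat θ y 0 0, aMat θ y 0 1; aMat θ y 0 1, aMat θ y 1 1])⁻¹ α β
          * (!![aMat θ y 0 0, aMat θ y 0 1; aMat θ y 0 1, aMat θ y 1 1])⁻¹ σ τ
        + 2*mu*((!![aMat θ y 0 0, aMat θ y 0 1; aMat θ y 0 1, aMat θ y 1 1])⁻¹ α σ
            * (!![aMat θ y 0 0, aMat θ y 0 1; aMat θ y 0 1, aMat θ y 1 1])⁻¹ β τ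
          + (!![aMat θ y 0 0, aMat θ y 0 1; aMat θ y 0 1, aMat θ y 1 1])⁻¹ α τ
            * (!![aMat θ y 0 0, aMat θ y 0 1; aMat θ y 0 1, aMat θ y 1 1])⁻¹ β σ) := by
    intro α β σ τ
    rw [A4, ainv, ← hM]
  simp only [hA4]
  exact key_alg _ _ _ _ lam mu hlam hmu hb11 hb12 hb22 hsqge t ht

/-- uniform positive-definiteness near the plate: if `θ_n` are `C²` immersions
with `‖θ_n − θ₀‖_{C²(ω̄)} < 1/n`, then there exist `N₁ > 0`, `C_e > 0`, `C₁ > 0` such that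
for every `n > N₁`, every `y ∈ ω̄`, and every symmetric `2×2` matrix `t`:
`C_e Σ |t_{αβ}|² ≤ a^{αβστ}_{θ_n}(y) t_{στ} t_{αβ} √(a_{θ_n}(y))` and `√(a_{θ_n}(y)) ≤ C₁`. -/
theorem uniform_positive_definiteness (ω : Set E2) (hω : IsNiceDomain ω)
    (lam mu : ℝ) (hlam : 0 ≤ lam) (hmu : 0 < mu)
    (θn : ℕ → E2 → V3) (hθn : ∀ n, IsImmersion ω (θn n))
    (hcl : ∀ n : ℕ, 0 < n → C2dist ω (θn n) θ0 < 1 / n) :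
    ∃ N₁ : ℕ, 0 < N₁ ∧ ∃ Ce > (0 : ℝ), ∃ C₁ > (0 : ℝ), ∀ n > N₁, ∀ y ∈ closure ω,
      (∀ t : Matrix (Fin 2) (Fin 2) ℝ, t.IsSymm →
        Ce * ∑ α, ∑ β, (t α β) ^ 2 ≤
          (∑ α, ∑ β, ∑ σ, ∑ τ, A4 (θn n) lam mu α β σ τ y * t σ τ * t α β)
            * Real.sqrt (aDet (θn n) y)) ∧
      Real.sqrt (aDet (θn n) y) ≤ C₁ := by
  have hbdd : Bornology.IsBounded ω := hω.2.2.1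
  have hθ0cd : ContDiff ℝ 2 θ0 := contDiff_pi.2 theta0_comp_contDiff
  refine ⟨300, by norm_num, mu, hmu, 2, by norm_num, ?_⟩
  intro n hn y hy
  have hnpos : 0 < n := by omega
  have hn' : (1:ℝ)/n ≤ 1/300 := by
    apply one_div_le_one_div_of_le (by norm_num)
    exact_mod_cast Nat.le_of_lt hn
  have hC : C2dist ω (θn n) θ0 ≤ 1/300 := le_of_lt (lt_of_lt_of_le (hcl n hnpos) hn')
  have hvs : ContDiff ℝ 2 (vsub (θn n) θ0) :=
    contDiff_pi.2 fun i => (comp_contDiff (hθn n).1 i).sub (theta0_comp_contDiff i)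
  have hbound : ∀ (α : Fin 2) (i : Fin 3),
      |pdv α (θn n) y i - pdv α θ0 y i| ≤ 1/300 := by
    intro α i
    have hcont : ∀ j, Continuous fun z => pdv α (vsub (θn n) θ0) z j :=
      fun j => pdv_continuous hvs α j
    have h3 : norm3 (pdv α (vsub (θn n) θ0) y) ≤ vC0 ω (pdv α (vsub (θn n) θ0)) :=
      le_vC0 ω hbdd hcont hy
    have h4 : vC0 ω (pdv α (vsub (θn n) θ0)) ≤ C2dist ω (θn n) θ0 := by
      rw [C2dist]
      simp only [Fin.sum_univ_two]
      fin_cases α <;> simp only [Fin.zero_eta, Fin.mk_one] <;>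
        linarith [vC0_nonneg ω (vsub (θn n) θ0),
          vC0_nonneg ω (pdv 0 (vsub (θn n) θ0)), vC0_nonneg ω (pdv 1 (vsub (θn n) θ0)),
          vC0_nonneg ω (pdv 0 (pdv 0 (vsub (θn n) θ0))),
          vC0_nonneg ω (pdv 1 (pdv 0 (vsub (θn n) θ0))),
          vC0_nonneg ω (pdv 0 (pdv 1 (vsub (θn n) θ0))),
          vC0_nonneg ω (pdv 1 (pdv 1 (vsub (θn n) θ0)))]
    have h5 := (comp_le_norm3 (pdv α (vsub (θn n) θ0) y) i).trans (h3.trans (h4.trans hC))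
    rwa [pdv_sub (hθn n).1 hθ0cd α y i] at h5
  have h0 : ∀ i : Fin 3, |pdv 0 (θn n) y i - ![(1:ℝ),0,0] i| ≤ 1/300 := by
    intro i
    have := hbound 0 i
    rw [pdv_theta0] at this
    simpa using this
  have h1 : ∀ i : Fin 3, |pdv 1 (θn n) y i - ![(0:ℝ),1,0] i| ≤ 1/300 := by
    intro i
    have := hbound 1 i
    rw [pdv_theta0] at this
    simpa using this
  exact key_pt (θn n) y lam mu hlam hmu h0 h1
end
end
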